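/- Let c be a positive real, Δ ∈ (0,1), T a real with T > 1, and set α = √(2·ln T). If Δ·√c = α, then for every real x ≥ 1: Δ·x/(c+x) + √(2·ln T/(c+x)) > √(2·ln T/c). -/

import Mathlib

/-! With `2 ln T = Δ² c`, the right-hand side is `Δ` and, for `t = c / (c + x) ∈ (0, 1)`, the
left-hand side is `Δ (1 - t + √t)`; it exceeds `Δ` because `t < √t`. -/

open Real

lemma one_lt_one_sub_add_sqrt {t : ℝ} (ht0 : 0 < t) (ht1 : t < 1) : 1 < 1 - t + √t := by
  have : t < √t := (lt_sqrt ht0.le).mpr (by nlinarith)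
  linarith

lemma eq_sq_mul_of_mul_sqrt_eq_sqrt {Δ c a : ℝ} (hc : 0 ≤ c) (ha : 0 ≤ a)
    (h : Δ * √c = √a) : a = Δ ^ 2 * c := by
  rw [← sq_sqrt ha, ← h, mul_pow, sq_sqrt hc]

lemma sqrt_sq_mul_div {Δ : ℝ} (hΔ : 0 ≤ Δ) (c d : ℝ) : √(Δ ^ 2 * c / d) = Δ * √(c / d) := by
  rw [mul_div_assoc, sqrt_mul (sq_nonneg Δ), sqrt_sq hΔ]

lemma lt_mul_div_add_mul_sqrt_div {Δ c x : ℝ} (hΔ : 0 < Δ) (hc : 0 < c) (hx : 0 < x) :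
    Δ < Δ * x / (c + x) + Δ * √(c / (c + x)) := by
  have hcx : 0 < c + x := by linarith
  have hx_eq : x / (c + x) = 1 - c / (c + x) := by field_simp; ring
  have key := one_lt_one_sub_add_sqrt (div_pos hc hcx) ((div_lt_one hcx).mpr (by linarith))
  calc Δ = Δ * 1 := (mul_one Δ).symm
    _ < Δ * (1 - c / (c + x) + √(c / (c + x))) := mul_lt_mul_of_pos_left key hΔ
    _ = Δ * x / (c + x) + Δ * √(c / (c + x)) := by rw [mul_div_assoc, hx_eq]; ring

theorem stmt_7_general (c Δ T : ℝ) (hc : 0 < c) (hΔ0 : 0 < Δ) (hT : 1 < T)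
    (heq : Δ * Real.sqrt c = Real.sqrt (2 * Real.log T)) :
    ∀ x : ℝ, 1 ≤ x →
      Δ * x / (c + x) + Real.sqrt (2 * Real.log T / (c + x)) >
        Real.sqrt (2 * Real.log T / c) := by
  intro x hx
  have hlog : 2 * log T = Δ ^ 2 * c :=
    eq_sq_mul_of_mul_sqrt_eq_sqrt hc.le (by linarith [log_pos hT]) heq
  have hrhs : √(Δ ^ 2 * c / c) = Δ := by
    rw [sqrt_sq_mul_div hΔ0.le, div_self hc.ne', sqrt_one, mul_one]
  rw [hlog, hrhs, sqrt_sq_mul_div hΔ0.le]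
  exact lt_mul_div_add_mul_sqrt_div hΔ0 hc (by linarith)

theorem stmt_7 (c Δ T : ℝ) (hc : 0 < c) (hΔ0 : 0 < Δ) (hΔ1 : Δ < 1) (hT : 1 < T)
    (heq : Δ * Real.sqrt c = Real.sqrt (2 * Real.log T)) :
    ∀ x : ℝ, 1 ≤ x →
      Δ * x / (c + x) + Real.sqrt (2 * Real.log T / (c + x)) >
        Real.sqrt (2 * Real.log T / c) :=
  stmt_7_general c Δ T hc hΔ0 hT heq
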